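/- arXiv:0909.0743 — 2 statements merged into one kernel-verified Lean document; each statement's English description precedes it below -/
import Mathlib

section
/- Let h, m, n be positive integers with m ≥ n, and for 0 ≤ ν ≤ n(h−1) let c_ν be the coefficient of x^ν in the polynomial (1 + x + ⋯ + x^{h−1})^n (the h-nomial coefficients of order n). Then for every s ∈ ℤ_p: Δ_h^n C(s,m) = Σ_{ν=0}^{n(h−1)} c_ν · C(s+ν, m−n). Moreover Σ_{ν=0}^{n(h−1)} c_ν = h^n. -/
open Finset

/-- The forward difference operator `Δ_h^n` with increment `h ≥ 1`:
`Δ_h^n f(s) = ∑_{ν=0}^n (n choose ν)·(−1)^(n−ν)·f(s+νh)`. -/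
noncomputable def deltaH (p : ℕ) [Fact p.Prime] (h : ℕ) (f : ℤ_[p] → ℤ_[p]) (n : ℕ)
    (s : ℤ_[p]) : ℤ_[p] :=
  ∑ ν ∈ Finset.range (n + 1),
    (n.choose ν : ℤ_[p]) * (-1) ^ (n - ν) * f (s + (ν : ℤ_[p]) * (h : ℤ_[p]))

/-- The binomial polynomial `C(s,m) = s(s−1)⋯(s−m+1)/m!`, as a function `ℤ_[p] → ℤ_[p]`. -/
noncomputable def binomC (p : ℕ) [Fact p.Prime] (s : ℤ_[p]) (m : ℕ) : ℤ_[p] :=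
  Ring.choose s m

/-!
Write `E` for the shift `f ↦ f (· + 1)`. Then `Δ_h = E^h - 1 = (1 + E + ⋯ + E^(h-1)) (E - 1)`, so
`Δ_h^n = P(E) Δ^n` with `P = (1 + X + ⋯ + X^(h-1))^n`, and `Δ^n C(·, m) = C(·, m - n)` by Pascal's
rule. The coefficients of `P` sum to `P(1) = h^n`.
-/

open Polynomial fwdDiff_aux
open scoped fwdDiff

lemma natDegree_geomSum_pow_lt (h n : ℕ) :
    ((∑ i ∈ range h, (X : ℤ[X]) ^ i) ^ n).natDegree < n * (h - 1) + 1 := by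
  have hsum : (∑ i ∈ range h, (X : ℤ[X]) ^ i).natDegree ≤ h - 1 :=
    natDegree_sum_le_of_forall_le _ _ fun i hi => by
      rw [natDegree_X_pow]
      exact Nat.le_sub_one_of_lt (mem_range.mp hi)
  exact Nat.lt_succ_of_le (natDegree_pow_le.trans (Nat.mul_le_mul_left n hsum))

lemma sum_coeff_geomSum_pow (h n : ℕ) :
    ∑ ν ∈ range (n * (h - 1) + 1), ((∑ i ∈ range h, (X : ℤ[X]) ^ i) ^ n).coeff ν = (h : ℤ) ^ n := by
  simpa using (eval_eq_sum_range' (natDegree_geomSum_pow_lt h n) (1 : ℤ)).symm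

section Shift

variable {M G : Type*} [AddCommMonoid M] [AddCommGroup G] (a : M)

lemma shiftₗ_nsmul (h : ℕ) : shiftₗ M G (h • a) = shiftₗ M G a ^ h := by
  ext f y
  rw [shiftₗ_apply, shiftₗ_pow_apply]

lemma fwdDiffₗ_nsmul_eq_aeval (h : ℕ) :
    fwdDiffₗ M G (h • a) = aeval (shiftₗ M G a) (X ^ h - 1 : ℤ[X]) := by
  rw [map_sub, map_pow, aeval_X, map_one, ← shiftₗ_nsmul, shiftₗ, add_sub_cancel_right]

lemma aeval_shiftₗ_apply {P : ℤ[X]} {N : ℕ} (hP : P.natDegree < N) (f : M → G) (y : M) :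
    aeval (shiftₗ M G a) P f y = ∑ ν ∈ range N, P.coeff ν • f (y + ν • a) := by
  simp only [aeval_eq_sum_range' hP, LinearMap.sum_apply, Finset.sum_apply,
    LinearMap.smul_apply, Pi.smul_apply, shiftₗ_pow_apply]

theorem fwdDiff_iter_nsmul (h n : ℕ) (f : M → G) (y : M) :
    Δ_[h • a] ^[n] f y = ∑ ν ∈ range (n * (h - 1) + 1),
      ((∑ i ∈ range h, (X : ℤ[X]) ^ i) ^ n).coeff ν • Δ_[a] ^[n] f (y + ν • a) := by
  have hfactor : ((X ^ h - 1) ^ n : ℤ[X]) = (∑ i ∈ range h, X ^ i) ^ n * (X ^ 1 - 1) ^ n := by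
    rw [pow_one, ← mul_pow, geom_sum_mul]
  rw [← coe_fwdDiffₗ_pow, fwdDiffₗ_nsmul_eq_aeval, ← map_pow, hfactor, map_mul,
    Module.End.mul_apply, aeval_shiftₗ_apply a (natDegree_geomSum_pow_lt h n), map_pow,
    ← fwdDiffₗ_nsmul_eq_aeval, one_nsmul, coe_fwdDiffₗ_pow]

end Shift

section RingChoose

variable {R : Type*} [NonAssocRing R] [Pow R ℕ] [NatPowAssoc R] [BinomialRing R]

lemma fwdDiff_ringChoose (k : ℕ) :
    Δ_[1] (fun x : R => Ring.choose x (k + 1)) = fun x => Ring.choose x k := by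
  ext x
  simp only [fwdDiff, Ring.choose_succ_succ, add_sub_cancel_right]

lemma fwdDiff_iter_ringChoose (k n : ℕ) :
    Δ_[1] ^[n] (fun x : R => Ring.choose x (k + n)) = fun x => Ring.choose x k := by
  induction n with
  | zero => rfl
  | succ n ih => rw [Function.iterate_succ_apply, ← add_assoc, fwdDiff_ringChoose, ih]

end RingChoose

lemma deltaH_eq_fwdDiff_iter (p : ℕ) [Fact p.Prime] (h : ℕ) (f : ℤ_[p] → ℤ_[p]) (n : ℕ)
    (s : ℤ_[p]) : deltaH p h f n s = Δ_[(h : ℤ_[p])] ^[n] f s := by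
  rw [deltaH, fwdDiff_iter_eq_sum_shift]
  refine sum_congr rfl fun ν _ => ?_
  rw [zsmul_eq_mul, nsmul_eq_mul]
  push_cast
  ring

theorem stmt1_general (p : ℕ) [Fact p.Prime] (h m n : ℕ) (hnm : n ≤ m)
    (c : ℕ → ℤ)
    (hc : ∀ ν, c ν = ((∑ i ∈ Finset.range h, (Polynomial.X : Polynomial ℤ) ^ i) ^ n).coeff ν) :
    (∀ s : ℤ_[p],
        deltaH p h (fun x => binomC p x m) n s =
          ∑ ν ∈ Finset.range (n * (h - 1) + 1), (c ν : ℤ_[p]) * binomC p (s + (ν : ℤ_[p])) (m - n)) ∧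
      ∑ ν ∈ Finset.range (n * (h - 1) + 1), c ν = (h : ℤ) ^ n := by
  simp only [hc]
  refine ⟨fun s => ?_, sum_coeff_geomSum_pow h n⟩
  obtain ⟨k, rfl⟩ := Nat.exists_eq_add_of_le' hnm
  rw [deltaH_eq_fwdDiff_iter, ← nsmul_one h, Nat.add_sub_cancel]
  simp only [binomC]
  rw [fwdDiff_iter_nsmul, fwdDiff_iter_ringChoose]
  simp only [zsmul_eq_mul, nsmul_one]

theorem stmt1 (p : ℕ) [Fact p.Prime] (h m n : ℕ) (hh : 0 < h) (hn : 0 < n) (hnm : n ≤ m)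
    (c : ℕ → ℤ)
    (hc : ∀ ν, c ν = ((∑ i ∈ Finset.range h, (Polynomial.X : Polynomial ℤ) ^ i) ^ n).coeff ν) :
    (∀ s : ℤ_[p],
        deltaH p h (fun x => binomC p x m) n s =
          ∑ ν ∈ Finset.range (n * (h - 1) + 1), (c ν : ℤ_[p]) * binomC p (s + (ν : ℤ_[p])) (m - n)) ∧
      ∑ ν ∈ Finset.range (n * (h - 1) + 1), c ν = (h : ℤ) ^ n :=
  stmt1_general p h m n hnm c hc
end

section
/- Let p be a prime and f ∈ KS_{p,2}. Then for all s, t ∈ ℤ_p one has ‖f(s) − f(t)‖_p ≤ p^{−1}·‖s − t‖_p. In particular, s ≡ t (mod p^n ℤ_p) implies f(s) ≡ f(t) (mod p^{n+1} ℤ_p), i.e. f satisfies the Kummer congruences (KS_{p,2} ⊆ KS_{p,1}). -/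
open Finset

/-- `f ∈ KS_{p,2}`: `f` is continuous and satisfies the Kummer type congruences
`Δ^n f(s) ∈ p^n ℤ_p` for all integers `n ≥ 0` and all `s ∈ ℤ_p`. -/
def KS2 (p : ℕ) [Fact p.Prime] (f : ℤ_[p] → ℤ_[p]) : Prop :=
  Continuous f ∧ ∀ (n : ℕ) (s : ℤ_[p]), (p : ℤ_[p]) ^ n ∣ deltaH p 1 f n s

/-! Newton's expansion `f (t + m) - f t = ∑_{k ≥ 1} (m choose k) Δᵏ f t` together with
`pᵏ ∣ Δᵏ f t` gives `p ^ (n + 1) ∣ f (t + m) - f t` whenever `p ^ n ∣ m`, because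
`v_p (m choose k) ≥ n - v_p k` and `v_p k < k`. Continuity of `f` and density of `ℕ` in `ℤ_[p]`
extend this from natural `m` to all `m ∈ p ^ n ℤ_[p]`, and the norm bound is the case
`n = v_p (s - t)`. -/

theorem Nat.Prime.pow_succ_dvd_choose_mul_pow {p n m j : ℕ} (hp : p.Prime) (hm : p ^ n ∣ m)
    (hj : 0 < j) : p ^ (n + 1) ∣ m.choose j * p ^ j := by
  have hm_dvd : m ∣ m.choose j * j := by
    obtain ⟨j, rfl⟩ := Nat.exists_eq_add_one_of_ne_zero hj.ne'
    rcases m with _ | m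
    · simp
    · exact ⟨m.choose j, (Nat.add_one_mul_choose_eq m j).symm⟩
  set a := j.factorization p
  have ha : a < j := (Nat.lt_pow_self hp.one_lt).trans_le (Nat.ordProj_le p hj.ne')
  have hcop : (p ^ n).Coprime (j / p ^ a) := (Nat.coprime_ordCompl hp hj.ne').pow_left n
  have hn : p ^ n ∣ m.choose j * p ^ a := by
    refine hcop.dvd_of_dvd_mul_right ?_
    rw [mul_assoc, Nat.ordProj_mul_ordCompl_eq_self]
    exact hm.trans hm_dvd
  rw [pow_succ, ← Nat.add_sub_of_le ha.le, pow_add, ← mul_assoc, Nat.add_sub_of_le ha.le]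
  exact mul_dvd_mul hn (dvd_pow_self p (Nat.sub_ne_zero_of_lt ha))

open scoped fwdDiff

theorem pow_succ_dvd_sub_of_pow_dvd_fwdDiff_iter {M R : Type*} [AddCommMonoid M] [CommRing R]
    {p : ℕ} (hp : p.Prime) {h : M} {f : M → R} (hf : ∀ k y, (p : R) ^ k ∣ (Δ_[h])^[k] f y)
    {n m : ℕ} (hm : p ^ n ∣ m) (y : M) : (p : R) ^ (n + 1) ∣ f (y + m • h) - f y := by
  rw [shift_eq_sum_fwdDiff_iter h f m y, sum_range_succ', Nat.choose_zero_right, one_smul,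
    Function.iterate_zero_apply, add_sub_cancel_right]
  refine dvd_sum fun k _ => ?_
  obtain ⟨c, hc⟩ := hf (k + 1) y
  rw [hc, nsmul_eq_mul, ← mul_assoc]
  refine Dvd.dvd.mul_right ?_ c
  exact_mod_cast Nat.cast_dvd_cast (hp.pow_succ_dvd_choose_mul_pow hm k.succ_pos)

theorem deltaH_one_eq_fwdDiff_iter (p : ℕ) [Fact p.Prime] (f : ℤ_[p] → ℤ_[p]) (n : ℕ)
    (s : ℤ_[p]) : deltaH p 1 f n s = (Δ_[1])^[n] f s := by
  rw [deltaH, fwdDiff_iter_eq_sum_shift]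
  refine sum_congr rfl fun ν _ => ?_
  rw [zsmul_eq_mul, nsmul_eq_mul]
  push_cast
  ring

namespace PadicInt

variable {p : ℕ} [Fact p.Prime]

theorem pow_dvd_iff_norm_le (k : ℕ) (x : ℤ_[p]) :
    (p : ℤ_[p]) ^ k ∣ x ↔ ‖x‖ ≤ (p : ℝ) ^ (-(k : ℤ)) := by
  rw [norm_le_pow_iff_mem_span_pow, Ideal.mem_span_singleton]

theorem isClosed_setOf_pow_dvd (k : ℕ) : IsClosed {x : ℤ_[p] | (p : ℤ_[p]) ^ k ∣ x} := by
  simp only [pow_dvd_iff_norm_le]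
  exact isClosed_le continuous_norm continuous_const

theorem norm_le_inv_mul_norm_of_pow_dvd {x y : ℤ_[p]}
    (h : ∀ n : ℕ, (p : ℤ_[p]) ^ n ∣ x → (p : ℤ_[p]) ^ (n + 1) ∣ y) :
    ‖y‖ ≤ (p : ℝ)⁻¹ * ‖x‖ := by
  rcases eq_or_ne x 0 with rfl | hx
  · suffices hy : y = 0 by simp [hy]
    by_contra hy
    have := (mem_span_pow_iff_le_valuation y hy _).1
      (Ideal.mem_span_singleton.2 (h y.valuation (dvd_zero _)))
    omega
  have hp : (0 : ℝ) < p := mod_cast (Fact.out : p.Prime).pos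
  have hxy := (pow_dvd_iff_norm_le _ y).1 <|
    h x.valuation ((pow_dvd_iff_norm_le _ x).2 (norm_eq_zpow_neg_valuation hx).le)
  calc ‖y‖ ≤ (p : ℝ) ^ (-((x.valuation + 1 : ℕ) : ℤ)) := hxy
    _ = (p : ℝ)⁻¹ * ‖x‖ := by
      rw [norm_eq_zpow_neg_valuation hx, ← zpow_neg_one, ← zpow_add₀ hp.ne']
      push_cast
      ring_nf

theorem pow_succ_dvd_sub_of_pow_dvd_sub {f : ℤ_[p] → ℤ_[p]} (hcont : Continuous f)
    (hf : ∀ k y, (p : ℤ_[p]) ^ k ∣ (Δ_[1])^[k] f y) {n : ℕ} {s t : ℤ_[p]}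
    (hst : (p : ℤ_[p]) ^ n ∣ s - t) : (p : ℤ_[p]) ^ (n + 1) ∣ f s - f t := by
  obtain ⟨u, hu⟩ := hst
  rw [sub_eq_iff_eq_add'] at hu
  subst hu
  induction u using denseRange_natCast.induction_on with
  | hp => exact (isClosed_setOf_pow_dvd _).preimage (by fun_prop)
  | ih m =>
    simpa [mul_comm] using pow_succ_dvd_sub_of_pow_dvd_fwdDiff_iter (Fact.out : p.Prime) hf
      (Nat.dvd_mul_right (p ^ n) m) t

end PadicInt

theorem stmt4 (p : ℕ) [Fact p.Prime] (f : ℤ_[p] → ℤ_[p]) (hf : KS2 p f) :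
    (∀ s t : ℤ_[p], ‖f s - f t‖ ≤ (p : ℝ)⁻¹ * ‖s - t‖) ∧
      ∀ (n : ℕ) (s t : ℤ_[p]),
        (p : ℤ_[p]) ^ n ∣ s - t → (p : ℤ_[p]) ^ (n + 1) ∣ f s - f t := by
  obtain ⟨hcont, hdiff⟩ := hf
  simp only [deltaH_one_eq_fwdDiff_iter] at hdiff
  have hcong : ∀ (n : ℕ) (s t : ℤ_[p]),
      (p : ℤ_[p]) ^ n ∣ s - t → (p : ℤ_[p]) ^ (n + 1) ∣ f s - f t :=
    fun _ _ _ => PadicInt.pow_succ_dvd_sub_of_pow_dvd_sub hcont hdiff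
  exact ⟨fun s t => PadicInt.norm_le_inv_mul_norm_of_pow_dvd fun n => hcong n s t, hcong⟩
end
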